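/- arXiv:1111.6362 — 8 statements merged into one kernel-verified Lean document; each statement's English description precedes it below -/
import Mathlib

section
/- For all real x ≥ 0 and all real a, m ≥ 1, one has (1 - 1/(1+x)^m)^a ≤ m·x / a^(1/m). -/
/-!
Put `s = 1/(1+x)` and `t = 1 - s^m`. Bernoulli's inequality gives `t ≤ m (1 - s) = m x s`, so it
suffices that `a^(1/m) s t^(a-1) ≤ 1`, i.e. (raising to the power `m`) `a s^m t^(m(a-1)) ≤ 1`.
With `w = s^m` and `y = m(a-1) ≥ a - 1` this follows from `1 - w ≤ exp (-w)` and
`(1 + y) w ≤ 1 + y w ≤ exp (y w)`.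
-/

open Real

lemma one_add_mul_mul_one_sub_rpow_le_one {w y : ℝ} (hw : w ≤ 1) (hy : 0 ≤ y) :
    (1 + y) * w * (1 - w) ^ y ≤ 1 := by
  have hlin : (1 + y) * w ≤ exp (y * w) := by
    nlinarith [add_one_le_exp (y * w)]
  have hpow : (1 - w) ^ y ≤ exp (-w) ^ y :=
    rpow_le_rpow (by linarith) (one_sub_le_exp_neg w) hy
  calc (1 + y) * w * (1 - w) ^ y ≤ exp (y * w) * exp (-w) ^ y :=
        mul_le_mul hlin hpow (by positivity) (by positivity)
    _ = 1 := by rw [← exp_mul, ← exp_add]; ring_nf; exact exp_zero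

lemma one_sub_rpow_le_mul_one_sub {s m : ℝ} (hs : 0 ≤ s) (hm : 1 ≤ m) :
    1 - s ^ m ≤ m * (1 - s) := by
  have h := one_add_mul_self_le_rpow_one_add (s := s - 1) (by linarith) hm
  rw [add_sub_cancel] at h
  linarith

lemma rpow_one_div_mul_mul_one_sub_rpow_sub_one_le_one {a m s : ℝ} (ha : 1 ≤ a) (hm : 1 ≤ m)
    (hs₀ : 0 ≤ s) (hs₁ : s ≤ 1) :
    a ^ (1 / m) * s * (1 - s ^ m) ^ (a - 1) ≤ 1 := by
  have hm₀ : 0 < m := by linarith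
  have hw₀ : 0 ≤ s ^ m := rpow_nonneg hs₀ m
  have hw₁ : s ^ m ≤ 1 := rpow_le_one hs₀ hs₁ hm₀.le
  have ht : 0 ≤ 1 - s ^ m := by linarith
  have hy : 0 ≤ m * (a - 1) := by nlinarith
  have hroot : a ^ (1 / m) * s * (1 - s ^ m) ^ (a - 1)
      = (a * s ^ m * (1 - s ^ m) ^ (m * (a - 1))) ^ (1 / m) := by
    rw [mul_rpow (by positivity) (rpow_nonneg ht _), mul_rpow (by linarith) hw₀,
      ← rpow_mul hs₀, ← rpow_mul ht, mul_one_div_cancel hm₀.ne', rpow_one,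
      show m * (a - 1) * (1 / m) = a - 1 by field_simp]
  have hbound : a * s ^ m * (1 - s ^ m) ^ (m * (a - 1)) ≤ 1 := by
    refine le_trans ?_ (one_add_mul_mul_one_sub_rpow_le_one hw₁ hy)
    gcongr
    nlinarith
  rw [hroot]
  exact rpow_le_one (by positivity) hbound (by positivity)

lemma rpow_one_div_mul_mul_one_sub_rpow_le {a m s : ℝ} (ha : 1 ≤ a) (hm : 1 ≤ m)
    (hs₀ : 0 ≤ s) (hs₁ : s ≤ 1) :
    a ^ (1 / m) * s * (1 - s ^ m) ^ a ≤ m * (1 - s) := by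
  have ht : 0 ≤ 1 - s ^ m := by linarith [rpow_le_one hs₀ hs₁ (by linarith : 0 ≤ m)]
  have hsplit : (1 - s ^ m) ^ a = (1 - s ^ m) ^ (a - 1) * (1 - s ^ m) := by
    conv_lhs => rw [← sub_add_cancel a 1]
    rw [rpow_add' ht (by simp; linarith), rpow_one]
  calc a ^ (1 / m) * s * (1 - s ^ m) ^ a
        = a ^ (1 / m) * s * (1 - s ^ m) ^ (a - 1) * (1 - s ^ m) := by rw [hsplit]; ring
    _ ≤ 1 * (m * (1 - s)) :=
        mul_le_mul (rpow_one_div_mul_mul_one_sub_rpow_sub_one_le_one ha hm hs₀ hs₁)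
          (one_sub_rpow_le_mul_one_sub hs₀ hm) ht zero_le_one
    _ = m * (1 - s) := one_mul _

theorem stmt_0 (x a m : ℝ) (hx : 0 ≤ x) (ha : 1 ≤ a) (hm : 1 ≤ m) :
    (1 - 1 / (1 + x) ^ m) ^ a ≤ m * x / a ^ (1 / m) := by
  have hx₁ : 0 < 1 + x := by linarith
  set s := (1 + x)⁻¹ with hs
  have hs₁ : s ≤ 1 := inv_le_one_of_one_le₀ (by linarith)
  have hkey := rpow_one_div_mul_mul_one_sub_rpow_le ha hm (by positivity) hs₁
  rw [one_div, ← inv_rpow hx₁.le, le_div_iff₀ (rpow_pos_of_pos (by linarith) _)]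
  calc (1 - s ^ m) ^ a * a ^ (1 / m) = a ^ (1 / m) * s * (1 - s ^ m) ^ a * (1 + x) := by
        rw [hs]; field_simp
    _ ≤ m * (1 - s) * (1 + x) := by gcongr
    _ = m * x := by rw [hs]; field_simp; ring
end

section
/- For all real x ≥ 0 and all real a, m ≥ 1, one has (1 - 1/(1+x^2)^m)^a ≤ √m · x / (2a)^(1/(2m)). -/
/-!
Write `t = 1 - (1 + y)⁻ᵐ`. Bernoulli's inequality gives `t ≤ m y / (1 + y)`, and, applied once
more, `b s (1 - s)^(b-1) ≤ 1` for `s ∈ [0, 1]`, i.e. `t^(b-1) ≤ (1 + y)^m / b`. As `t^(b-1) ≤ 1`,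
taking `m`-th roots turns this into `t^(b-1) ≤ (1 + y) / b^(1/m)`, and multiplying the two bounds
gives `t^b ≤ m y / b^(1/m)`. The theorem is the case `y = x²`, `b = 2a`, after taking square roots.
-/

open Real

theorem mul_mul_one_sub_rpow_sub_one_le_one {w b : ℝ} (hw₀ : 0 ≤ w) (hw₁ : w ≤ 1) (hb : 1 ≤ b) :
    b * w * (1 - w) ^ (b - 1) ≤ 1 := by
  rcases hw₁.lt_or_eq with hw₁ | rfl
  · have hu : 0 < 1 - w := by linarith
    have hbern : 1 + b * (w / (1 - w)) ≤ (1 + w / (1 - w)) ^ b :=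
      one_add_mul_self_le_rpow_one_add (by linarith [div_nonneg hw₀ hu.le]) hb
    rw [show 1 + w / (1 - w) = (1 - w)⁻¹ by field_simp; ring, inv_rpow hu.le,
      le_inv_comm₀ (by positivity) (rpow_pos_of_pos hu b), ← one_div,
      le_div_iff₀ (by positivity)] at hbern
    have hexpand : (1 - w) ^ b * (1 + b * (w / (1 - w))) =
        (1 - w) ^ b + b * w * (1 - w) ^ (b - 1) := by
      rw [rpow_sub_one hu.ne']; ring
    linarith [rpow_nonneg hu.le b]
  · rcases hb.eq_or_lt with rfl | hb
    · norm_num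
    · simp [zero_rpow (sub_ne_zero.mpr hb.ne')]

theorem one_sub_one_div_one_add_rpow_le {y m : ℝ} (hy : 0 ≤ y) (hm : 1 ≤ m) :
    1 - 1 / (1 + y) ^ m ≤ m * y / (1 + y) := by
  have hy₁ : 0 < 1 + y := by linarith
  have hbern : 1 + m * (-y / (1 + y)) ≤ (1 + -y / (1 + y)) ^ m :=
    one_add_mul_self_le_rpow_one_add
      (by rw [neg_div, neg_le_neg_iff, div_le_one hy₁]; linarith) hm
  rw [show 1 + -y / (1 + y) = 1 / (1 + y) by field_simp; ring, div_rpow zero_le_one hy₁.le,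
    one_rpow] at hbern
  have : m * (-y / (1 + y)) = - (m * y / (1 + y)) := by ring
  linarith

theorem one_sub_one_div_one_add_rpow_rpow_le {y b m : ℝ} (hy : 0 ≤ y) (hb : 1 ≤ b) (hm : 1 ≤ m) :
    (1 - 1 / (1 + y) ^ m) ^ b ≤ m * y / b ^ (1 / m) := by
  have hy₁ : 0 < 1 + y := by linarith
  have hm₀ : 0 < m := by linarith
  have hP : 1 ≤ (1 + y) ^ m := one_le_rpow (by linarith) hm₀.le
  set t := 1 - 1 / (1 + y) ^ m
  have ht₀ : 0 ≤ t := by rw [sub_nonneg, div_le_one (by positivity)]; exact hP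
  have ht₁ : t ≤ 1 := by rw [sub_le_self_iff]; positivity
  have hamgm : t ^ (b - 1) ≤ (1 + y) ^ m / b := by
    have h := mul_mul_one_sub_rpow_sub_one_le_one (w := 1 / (1 + y) ^ m) (by positivity)
      (by linarith) hb
    rw [le_div_iff₀ (by linarith)]
    calc t ^ (b - 1) * b = b * (1 / (1 + y) ^ m) * t ^ (b - 1) * (1 + y) ^ m := by
          field_simp
      _ ≤ 1 * (1 + y) ^ m := by gcongr
      _ = (1 + y) ^ m := one_mul _
  have hroot : t ^ (b - 1) ≤ (1 + y) / b ^ (1 / m) := calc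
    t ^ (b - 1) ≤ (t ^ (b - 1)) ^ (1 / m) :=
      self_le_rpow_of_le_one (rpow_nonneg ht₀ _) (rpow_le_one ht₀ ht₁ (by linarith))
        (by rw [div_le_one hm₀]; exact hm)
    _ ≤ ((1 + y) ^ m / b) ^ (1 / m) := by gcongr
    _ = (1 + y) / b ^ (1 / m) := by
      rw [div_rpow (by positivity) (by linarith), ← rpow_mul hy₁.le, mul_one_div_cancel hm₀.ne',
        rpow_one]
  calc t ^ b = t ^ (b - 1) * t := by rw [← rpow_add_one' ht₀ (by linarith), sub_add_cancel]
    _ ≤ (1 + y) / b ^ (1 / m) * (m * y / (1 + y)) :=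
      mul_le_mul hroot (one_sub_one_div_one_add_rpow_le hy hm) ht₀ (by positivity)
    _ = m * y / b ^ (1 / m) := by field_simp

theorem stmt_1 (x a m : ℝ) (hx : 0 ≤ x) (ha : 1 ≤ a) (hm : 1 ≤ m) :
    (1 - 1 / (1 + x ^ 2) ^ m) ^ a ≤ Real.sqrt m * x / (2 * a) ^ (1 / (2 * m)) := by
  have hbase : 0 ≤ 1 - 1 / (1 + x ^ 2) ^ m := by
    rw [sub_nonneg, div_le_one (by positivity)]
    exact one_le_rpow (by nlinarith) (by linarith)
  refine (pow_le_pow_iff_left₀ (rpow_nonneg hbase a) (by positivity) two_ne_zero).mp ?_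
  calc ((1 - 1 / (1 + x ^ 2) ^ m) ^ a) ^ 2 = (1 - 1 / (1 + x ^ 2) ^ m) ^ (2 * a) := by
        rw [← rpow_mul_natCast hbase, mul_comm]; norm_num
    _ ≤ m * x ^ 2 / (2 * a) ^ (1 / m) :=
        one_sub_one_div_one_add_rpow_rpow_le (sq_nonneg x) (by linarith) hm
    _ = (Real.sqrt m * x / (2 * a) ^ (1 / (2 * m))) ^ 2 := by
        rw [div_pow, mul_pow, sq_sqrt (by linarith), ← rpow_mul_natCast (by linarith)]
        congr 2; push_cast; field_simp
end

section
/- For all real x ≥ 0 and all real a ≥ 1, one has (x²/(1+x²))^a ≤ x/√(2a), and in particular (x²/(1+x²))^a ≤ x/√a. -/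
open Real

/-- Bernoulli's inequality `(1 + 1/s)^p ≥ 1 + p/s` rearranged. -/
lemma mul_rpow_div_one_add_le {s p : ℝ} (hs : 0 ≤ s) (hp : 1 ≤ p) :
    p * (s / (1 + s)) ^ p ≤ s := by
  rcases hs.eq_or_lt with rfl | hs
  · simp [zero_rpow (by positivity : p ≠ 0)]
  have hy : 0 ≤ (s / (1 + s)) ^ p := by positivity
  have hbernoulli : 1 + p * s⁻¹ ≤ (1 + s⁻¹) ^ p :=
    one_add_mul_self_le_rpow_one_add (by linarith [inv_nonneg.2 hs.le]) hp
  have hcancel : (1 + s⁻¹) * (s / (1 + s)) = 1 := by field_simp; ring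
  have : p * s⁻¹ * (s / (1 + s)) ^ p ≤ 1 :=
    calc p * s⁻¹ * (s / (1 + s)) ^ p ≤ (1 + p * s⁻¹) * (s / (1 + s)) ^ p := by nlinarith
      _ ≤ (1 + s⁻¹) ^ p * (s / (1 + s)) ^ p := by gcongr
      _ = 1 := by rw [← mul_rpow (by positivity) (by positivity), hcancel, one_rpow]
  calc p * (s / (1 + s)) ^ p = s * (p * s⁻¹ * (s / (1 + s)) ^ p) := by field_simp
    _ ≤ s := mul_le_of_le_one_right hs.le this

lemma rpow_sq_div_one_add_sq_le {x a : ℝ} (hx : 0 ≤ x) (ha : 1 / 2 ≤ a) :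
    (x ^ 2 / (1 + x ^ 2)) ^ a ≤ x / √(2 * a) := by
  have h2a : 0 < 2 * a := by linarith
  calc (x ^ 2 / (1 + x ^ 2)) ^ a = √((x ^ 2 / (1 + x ^ 2)) ^ (2 * a)) := by
        rw [sqrt_eq_rpow, ← rpow_mul (by positivity)]
        ring_nf
    _ ≤ √(x ^ 2 / (2 * a)) := by
        gcongr
        rw [le_div_iff₀' h2a]
        exact mul_rpow_div_one_add_le (sq_nonneg x) (by linarith)
    _ = x / √(2 * a) := by rw [sqrt_div' _ h2a.le, sqrt_sq hx]

theorem stmt_2 (x a : ℝ) (hx : 0 ≤ x) (ha : 1 ≤ a) :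
    (x ^ 2 / (1 + x ^ 2)) ^ a ≤ x / Real.sqrt (2 * a) ∧
    (x ^ 2 / (1 + x ^ 2)) ^ a ≤ x / Real.sqrt a := by
  have key := rpow_sq_div_one_add_sq_le hx (by linarith : 1 / 2 ≤ a)
  refine ⟨key, key.trans ?_⟩
  gcongr
  linarith
end

section
/- For every real x ≥ 0 and every integer n ≥ 1, |(1 + x/n)^(−n) − e^(−x)| ≤ 2/n. -/
/-!
Put `t = x / n` and `B = (1 + t) ^ n`, so the quantity is `B⁻¹ - e^{-x}`, which is nonnegative
because `B ≤ e^x`. Since `e^{-t} (1 + t) ≥ (1 - t)(1 + t) = 1 - t²`, Bernoulli's inequality gives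
`1 - e^{-x} B = 1 - (e^{-t} (1 + t)) ^ n ≤ n t² = x² / n`, hence `B⁻¹ - e^{-x} ≤ x² / (n B)`.
For `n ≥ 3` the sequence `(1 + x / n) ^ n` is increasing in `n`, so
`B ≥ (1 + x / 3) ^ 3 ≥ x² / 2`, which gives the bound `2 / n`; for `n ≤ 2` the trivial bound
`B⁻¹ ≤ 1 ≤ 2 / n` suffices.
-/

open Real

lemma one_sub_sq_le_exp_neg_mul_one_add {t : ℝ} (ht : -1 ≤ t) :
    1 - t ^ 2 ≤ exp (-t) * (1 + t) :=
  calc 1 - t ^ 2 = (1 - t) * (1 + t) := by ring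
    _ ≤ exp (-t) * (1 + t) := by
      gcongr
      · linarith
      · exact one_sub_le_exp_neg t

lemma one_sub_exp_neg_mul_one_add_div_pow_le {x : ℝ} {n : ℕ} (hn : 0 < n) (hx : -n ≤ x) :
    1 - exp (-x) * (1 + x / n) ^ n ≤ x ^ 2 / n := by
  have hn' : (0 : ℝ) < n := by exact_mod_cast hn
  set t := x / n with ht
  have ht1 : -1 ≤ t := by rw [ht, le_div_iff₀ hn']; linarith
  have hf : 0 ≤ exp (-t) * (1 + t) := mul_nonneg (exp_pos _).le (by linarith)
  have hpow : exp (-x) * (1 + t) ^ n = (exp (-t) * (1 + t)) ^ n := by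
    rw [mul_pow, ← exp_nat_mul, ht]; field_simp
  have hbernoulli := one_add_mul_sub_le_pow (by linarith : -1 ≤ exp (-t) * (1 + t)) n
  calc 1 - exp (-x) * (1 + t) ^ n ≤ n * (1 - exp (-t) * (1 + t)) := by rw [hpow]; linarith
    _ ≤ n * t ^ 2 := by gcongr; linarith [one_sub_sq_le_exp_neg_mul_one_add ht1]
    _ = x ^ 2 / n := by rw [ht]; field_simp

lemma one_add_div_pow_le_one_add_div_pow {x : ℝ} {m n : ℕ} (hm : 0 < m) (hmn : m ≤ n)
    (hx : -m ≤ x) : (1 + x / m) ^ m ≤ (1 + x / n) ^ n := by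
  have hm' : (0 : ℝ) < m := by exact_mod_cast hm
  have hn' : (0 : ℝ) < n := hm'.trans_le (by exact_mod_cast hmn)
  have hmn' : (m : ℝ) ≤ n := by exact_mod_cast hmn
  have hs : -1 ≤ x / n := by rw [le_div_iff₀ hn']; linarith
  have hp : 1 ≤ (n / m : ℝ) := by rwa [one_le_div hm']
  have hbase : 0 ≤ 1 + x / m := by
    have : -1 ≤ x / m := by rw [le_div_iff₀ hm']; linarith
    linarith
  -- Bernoulli for the real exponent `n / m`, then raise to the power `m`
  have hbernoulli := one_add_mul_self_le_rpow_one_add hs hp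
  have hlhs : 1 + (n / m : ℝ) * (x / n) = 1 + x / m := by field_simp
  rw [hlhs] at hbernoulli
  calc (1 + x / m) ^ m ≤ ((1 + x / n) ^ (n / m : ℝ)) ^ m := by gcongr
    _ = (1 + x / n) ^ n := by
      rw [← rpow_mul_natCast (by linarith), div_mul_cancel₀ _ hm'.ne', rpow_natCast]

lemma sq_le_two_mul_one_add_div_three_pow {x : ℝ} (hx : 0 ≤ x) :
    x ^ 2 ≤ 2 * (1 + x / 3) ^ 3 := by
  nlinarith [mul_nonneg hx (sq_nonneg (x - 3))]

lemma sq_le_two_mul_one_add_div_pow {x : ℝ} (hx : 0 ≤ x) {n : ℕ} (hn : 3 ≤ n) :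
    x ^ 2 ≤ 2 * (1 + x / n) ^ n := by
  have hmono := one_add_div_pow_le_one_add_div_pow (x := x) (by norm_num) hn (by push_cast; linarith)
  push_cast at hmono
  linarith [sq_le_two_mul_one_add_div_three_pow hx]

theorem stmt_3 (x : ℝ) (hx : 0 ≤ x) (n : ℕ) (hn : 1 ≤ n) :
    |(1 + x / n) ^ (-(n : ℝ)) - Real.exp (-x)| ≤ 2 / n := by
  have hn' : (0 : ℝ) < n := by exact_mod_cast hn
  have hbase : 1 ≤ 1 + x / n := by have := div_nonneg hx hn'.le; linarith
  set B := (1 + x / n) ^ n with hB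
  have hB1 : 1 ≤ B := one_le_pow₀ hbase
  have hBexp : exp (-x) ≤ B⁻¹ := by
    have := one_sub_div_pow_le_exp_neg (n := n) (t := -x) (by linarith)
    rw [sub_eq_add_neg, neg_div, neg_neg, neg_neg] at this
    rw [exp_neg]; exact inv_anti₀ (by linarith) this
  rw [rpow_neg (by linarith), rpow_natCast, ← hB, abs_of_nonneg (by linarith)]
  rcases le_or_gt 3 n with h3 | h3
  · have hx2 : x ^ 2 ≤ 2 * B := sq_le_two_mul_one_add_div_pow hx h3
    have hgap := one_sub_exp_neg_mul_one_add_div_pow_le (x := x) hn (by linarith)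
    calc B⁻¹ - exp (-x) = (1 - exp (-x) * B) / B := by field_simp
      _ ≤ (x ^ 2 / n) / B := by gcongr
      _ ≤ 2 / n := by
        rw [div_div, div_le_div_iff₀ (by positivity) hn']; nlinarith
  · have h2n : (1 : ℝ) ≤ 2 / n := by
      rw [le_div_iff₀ hn', one_mul]; exact_mod_cast (by omega : n ≤ 2)
    linarith [inv_le_one_of_one_le₀ hB1, exp_pos (-x)]
end

section
/- For all real x ≥ 0 and all real z with 0 < z ≤ 1 and all real a > 1, one has ((a−1)/(a+z))^(a−1) · ((1+z)/(1+z/a))^(1+z) ≤ 1. -/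
/-!
With `y ^ t ≤ exp (t * (y - 1))` (i.e. `log y ≤ y - 1`) applied to both factors, the product is
at most `exp ((a - 1) * (1 + z) * (z - 1) / (a + z))`, and the exponent is `≤ 0` because `z ≤ 1`.
-/

open Real

lemma Real.rpow_le_exp_mul_sub_one {y t : ℝ} (hy : 0 < y) (ht : 0 ≤ t) :
    y ^ t ≤ exp (t * (y - 1)) := by
  rw [rpow_def_of_pos hy, mul_comm]
  exact exp_le_exp.mpr (mul_le_mul_of_nonneg_left (log_le_sub_one_of_pos hy) ht)

theorem stmt_8_general (z a : ℝ) (hz0 : 0 < z) (hz1 : z ≤ 1) (ha : 1 < a) :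
    ((a - 1) / (a + z)) ^ (a - 1) * ((1 + z) / (1 + z / a)) ^ (1 + z) ≤ 1 := by
  have hs : 0 < a + z := by linarith
  have hexponent : (a - 1) * ((a - 1) / (a + z) - 1) + (1 + z) * ((1 + z) / (1 + z / a) - 1)
      = (a - 1) * (1 + z) * (z - 1) / (a + z) := by
    field_simp
    ring
  calc ((a - 1) / (a + z)) ^ (a - 1) * ((1 + z) / (1 + z / a)) ^ (1 + z)
      ≤ exp ((a - 1) * ((a - 1) / (a + z) - 1)) * exp ((1 + z) * ((1 + z) / (1 + z / a) - 1)) :=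
        mul_le_mul (rpow_le_exp_mul_sub_one (by positivity) (by linarith))
          (rpow_le_exp_mul_sub_one (by positivity) (by linarith)) (by positivity) (exp_nonneg _)
    _ = exp ((a - 1) * (1 + z) * (z - 1) / (a + z)) := by rw [← exp_add, hexponent]
    _ ≤ 1 := exp_le_one_iff.mpr <|
        div_nonpos_of_nonpos_of_nonneg
          (mul_nonpos_of_nonneg_of_nonpos (by nlinarith) (by linarith)) hs.le

theorem stmt_8 (x z a : ℝ) (hx : 0 ≤ x) (hz0 : 0 < z) (hz1 : z ≤ 1) (ha : 1 < a) :
    ((a - 1) / (a + z)) ^ (a - 1) * ((1 + z) / (1 + z / a)) ^ (1 + z) ≤ 1 :=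
  stmt_8_general z a hz0 hz1 ha
end

section
/- For fixed 0 < z ≤ 1, the function f(a) = (a−1)·log(a−1) − (a−1)·log(a+z) + (1+z)·log(1+z) − (1+z)·log(1 + z/a), defined for a > 1, is convex: its second derivative f''(a) = −(z+1)(az − z − a)/(a²(a−1)(z+a)) is nonnegative for all a > 1. -/
/-!
Splitting `log (1 + z / a) = log (a + z) - log a`, the function becomes
`(a - 1) log (a - 1) - (a + z) log (a + z) + (1 + z) log a` plus a constant, whose derivative
`log (a - 1) - log (a + z) + (1 + z) / a` has derivative
`1 / (a - 1) - 1 / (a + z) - (1 + z) / a ^ 2 = (z + 1) (a (1 - z) + z) / (a ^ 2 (a - 1) (a + z))`.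
For `a > 1` and `0 ≤ z ≤ 1` every factor is nonnegative.
-/

open Real Set

section
variable {z a : ℝ}

lemma neg_mul_div_nonneg_of_one_lt (hz0 : 0 ≤ z) (hz1 : z ≤ 1) (ha : 1 < a) :
    0 ≤ -((z + 1) * (a * z - z - a)) / (a ^ 2 * (a - 1) * (z + a)) := by
  have hnum : -((z + 1) * (a * z - z - a)) = (z + 1) * (a * (1 - z) + z) := by ring
  rw [hnum]
  apply div_nonneg
  · have : 0 ≤ a * (1 - z) := mul_nonneg (by linarith) (by linarith)
    positivity
  · have : 0 < a - 1 := by linarith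
    have : 0 < z + a := by linarith
    positivity

lemma hasDerivAt_sub_one_mul_log_sub_add_mul_log_add (h1 : a - 1 ≠ 0) (hz : a + z ≠ 0)
    (h0 : a ≠ 0) :
    HasDerivAt (fun a => (a - 1) * log (a - 1) - (a + z) * log (a + z) + (1 + z) * log a)
      (log (a - 1) - log (a + z) + (1 + z) / a) a := by
  have H1 := (hasDerivAt_mul_log h1).comp_sub_const a 1
  have H2 := (hasDerivAt_mul_log hz).comp_add_const a z
  have H3 := (hasDerivAt_log h0).const_mul (1 + z)
  refine ((H1.sub H2).add H3).congr_deriv ?_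
  ring

lemma hasDerivAt_log_sub_one_sub_log_add_add_div (h1 : a - 1 ≠ 0) (hz : a + z ≠ 0)
    (h0 : a ≠ 0) :
    HasDerivAt (fun a => log (a - 1) - log (a + z) + (1 + z) / a)
      (-((z + 1) * (a * z - z - a)) / (a ^ 2 * (a - 1) * (z + a))) a := by
  have H1 := (hasDerivAt_log h1).comp_sub_const a 1
  have H2 := (hasDerivAt_log hz).comp_add_const a z
  have H3 := (hasDerivAt_inv h0).const_mul (1 + z)
  have hz' : z + a ≠ 0 := by rwa [add_comm]
  refine ((H1.sub H2).add H3).congr_deriv ?_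
  field_simp
  ring

lemma convexOn_sub_one_mul_log_sub_add_mul_log_add (hz0 : 0 ≤ z) (hz1 : z ≤ 1) :
    ConvexOn ℝ (Ioi 1)
      (fun a => (a - 1) * log (a - 1) - (a + z) * log (a + z) + (1 + z) * log a) := by
  have hf' (a : ℝ) (ha : 1 < a) := hasDerivAt_sub_one_mul_log_sub_add_mul_log_add (z := z)
    (a := a) (by linarith) (by linarith) (by linarith)
  have hf'' (a : ℝ) (ha : 1 < a) := hasDerivAt_log_sub_one_sub_log_add_add_div (z := z)
    (a := a) (by linarith) (by linarith) (by linarith)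
  exact convexOn_of_hasDerivWithinAt2_nonneg (convex_Ioi 1)
    (fun a ha => (hf' a ha).continuousAt.continuousWithinAt)
    (fun a ha => (hf' a (interior_subset ha)).hasDerivWithinAt)
    (fun a ha => (hf'' a (interior_subset ha)).hasDerivWithinAt)
    (fun a ha => neg_mul_div_nonneg_of_one_lt hz0 hz1 (interior_subset ha))

end

theorem stmt_9 (z : ℝ) (hz0 : 0 < z) (hz1 : z ≤ 1) :
    ConvexOn ℝ (Set.Ioi (1 : ℝ))
      (fun a : ℝ => (a - 1) * Real.log (a - 1) - (a - 1) * Real.log (a + z)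
        + (1 + z) * Real.log (1 + z) - (1 + z) * Real.log (1 + z / a)) ∧
    ∀ a : ℝ, 1 < a →
      0 ≤ -((z + 1) * (a * z - z - a)) / (a ^ 2 * (a - 1) * (z + a)) := by
  refine ⟨?_, fun a ha => neg_mul_div_nonneg_of_one_lt hz0.le hz1 ha⟩
  refine ((convexOn_sub_one_mul_log_sub_add_mul_log_add hz0.le hz1).add_const
    ((1 + z) * log (1 + z))).congr fun a (ha : 1 < a) => ?_
  have hsplit : log (1 + z / a) = log (a + z) - log a := by
    rw [← log_div (by linarith) (by linarith), add_div, div_self (by linarith)]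
  simp only [Pi.add_apply, hsplit]
  ring
end

section
/- For fixed 0 < z ≤ 1, the function g(a) = log(a−1) − log(z+a) + (1+z)/a, defined for a > 1, satisfies lim_{a→∞} g(a) = 0, and since g is increasing on (1,∞), g(a) ≤ 0 for all a > 1. -/
/-!
On `(1, ∞)` the derivative of `g(a) = log (a - 1) - log (z + a) + (1 + z) / a` is
`(1 + z) (a (1 - z) + z) / ((a - 1) (z + a) a²)`, which is nonnegative for `-1 ≤ z ≤ 1`, so `g` is
monotone there. Since `log (a - 1) - log (z + a) → 0` and `(1 + z) / a → 0`, the monotone function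
`g` tends to `0` and hence stays below its limit.
-/

open Filter Set Real Topology

theorem MonotoneOn.le_of_tendsto_atTop {α β : Type*} [TopologicalSpace α] [Preorder α]
    [OrderClosedTopology α] [SemilatticeSup β] [NoMaxOrder β] {f : β → α} {b x : β} {l : α}
    (hf : MonotoneOn f (Ioi b)) (hl : Tendsto f atTop (𝓝 l)) (hx : b < x) : f x ≤ l :=
  haveI : Nonempty β := ⟨x⟩
  ge_of_tendsto hl <| (eventually_ge_atTop x).mono fun _ hy => hf hx (hx.trans_le hy) hy

theorem tendsto_log_sub_log_add_div (z : ℝ) :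
    Tendsto (fun a : ℝ => log (a - 1) - log (z + a) + (1 + z) / a) atTop (𝓝 0) := by
  have hlog := (tendsto_log_comp_add_sub_log (-1)).sub (tendsto_log_comp_add_sub_log z)
  have hdiv := tendsto_const_nhds (x := 1 + z).div_atTop tendsto_id
  convert hlog.add hdiv using 2 with a
  · simp only [id, add_comm z a, ← sub_eq_add_neg]
    ring
  · simp

theorem hasDerivAt_log_sub_log_add_div {z a : ℝ} (ha₁ : a - 1 ≠ 0) (hza : z + a ≠ 0)
    (ha₀ : a ≠ 0) :
    HasDerivAt (fun a : ℝ => log (a - 1) - log (z + a) + (1 + z) / a)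
      ((1 + z) * (a * (1 - z) + z) / ((a - 1) * (z + a) * a ^ 2)) a := by
  refine (((((hasDerivAt_id' a).sub_const 1).log ha₁).sub
    (((hasDerivAt_id' a).const_add z).log hza)).add
    ((hasDerivAt_const a (1 + z)).fun_div (hasDerivAt_id' a) ha₀)).congr_deriv ?_
  field_simp
  ring

theorem monotoneOn_log_sub_log_add_div {z : ℝ} (hz₀ : -1 ≤ z) (hz₁ : z ≤ 1) :
    MonotoneOn (fun a : ℝ => log (a - 1) - log (z + a) + (1 + z) / a) (Ioi 1) := by
  have hderiv {a : ℝ} (ha : a ∈ Ioi 1) :=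
    hasDerivAt_log_sub_log_add_div (z := z) (a := a) (by grind) (by grind) (by grind)
  refine monotoneOn_of_deriv_nonneg (convex_Ioi 1)
    (fun a ha => (hderiv ha).continuousAt.continuousWithinAt)
    (fun a ha => (hderiv (interior_subset ha)).differentiableAt.differentiableWithinAt)
    fun a ha => ?_
  rw [interior_Ioi, mem_Ioi] at ha
  rw [(hderiv ha).deriv]
  have ha₁ : 0 ≤ a - 1 := by linarith
  have hnum : 0 ≤ a * (1 - z) + z := by nlinarith [mul_nonneg (sub_nonneg.2 hz₁) ha₁]
  have hza : 0 ≤ z + a := by linarith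
  have hz : 0 ≤ 1 + z := by linarith
  positivity

theorem stmt_10 (z : ℝ) (hz0 : 0 < z) (hz1 : z ≤ 1) :
    Filter.Tendsto
      (fun a : ℝ => Real.log (a - 1) - Real.log (z + a) + (1 + z) / a)
      Filter.atTop (nhds 0) ∧
    MonotoneOn
      (fun a : ℝ => Real.log (a - 1) - Real.log (z + a) + (1 + z) / a)
      (Set.Ioi (1 : ℝ)) ∧
    ∀ a : ℝ, 1 < a →
      Real.log (a - 1) - Real.log (z + a) + (1 + z) / a ≤ 0 := by
  have hmono := monotoneOn_log_sub_log_add_div (by linarith) hz1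
  have hlim := tendsto_log_sub_log_add_div z
  exact ⟨hlim, hmono, fun a ha => hmono.le_of_tendsto_atTop hlim ha⟩
end

section
/- For all real y ∈ (0,1) and all real a, m ≥ 1, one has (1 − y^m)^(a−1) · y^(m+1) ≤ a^(−1−1/m). -/
/-!
With t = y ^ m, s = a - 1 and b = 1 + 1 / m ∈ (1, 2], the claim reads (1 - t) ^ s * t ^ b ≤ (s + 1) ^ (-b).
Weighted AM–GM bounds (1 - t) ^ s * t ^ b by its maximum s ^ s * b ^ b / (s + b) ^ (s + b), and a second
weighted AM–GM, applied to s and b * (s + 1), bounds s ^ s * (b * (s + 1)) ^ b by (s + b) ^ (s + b); the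
latter reduces to s ^ 2 + b ^ 2 * (s + 1) ≤ (s + b) ^ 2, which is exactly b ≤ 2.
-/

open Real

theorem rpow_mul_rpow_le_arith_mean_rpow {x y s b : ℝ} (hx : 0 ≤ x) (hy : 0 ≤ y)
    (hs : 0 < s) (hb : 0 < b) :
    x ^ s * y ^ b ≤ ((s * x + b * y) / (s + b)) ^ (s + b) := by
  have hsb : 0 < s + b := by linarith
  have amgm := geom_mean_le_arith_mean2_weighted (div_nonneg hs.le hsb.le)
    (div_nonneg hb.le hsb.le) hx hy (by field_simp)
  have hpow : (x ^ (s / (s + b)) * y ^ (b / (s + b))) ^ (s + b) = x ^ s * y ^ b := by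
    rw [mul_rpow (by positivity) (by positivity), ← rpow_mul hx, ← rpow_mul hy,
      div_mul_cancel₀ _ hsb.ne', div_mul_cancel₀ _ hsb.ne']
  rw [← hpow]
  refine rpow_le_rpow (by positivity) (amgm.trans_eq ?_) hsb.le
  field_simp

theorem one_sub_rpow_mul_rpow_mul_rpow_le {t s b : ℝ} (ht0 : 0 ≤ t) (ht1 : t ≤ 1)
    (hs : 0 < s) (hb : 0 < b) :
    (1 - t) ^ s * t ^ b * (s + b) ^ (s + b) ≤ s ^ s * b ^ b := by
  have hsb : 0 < s + b := by linarith
  have h := rpow_mul_rpow_le_arith_mean_rpow (div_nonneg (sub_nonneg.2 ht1) hs.le)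
    (div_nonneg ht0 hb.le) hs hb
  rw [mul_div_cancel₀ _ hs.ne', mul_div_cancel₀ _ hb.ne', sub_add_cancel,
    div_rpow (sub_nonneg.2 ht1) hs.le, div_rpow ht0 hb.le, div_rpow zero_le_one hsb.le,
    one_rpow, div_mul_div_comm, div_le_div_iff₀ (by positivity) (by positivity), one_mul] at h
  exact h

theorem rpow_self_mul_mul_add_one_rpow_le {s b : ℝ} (hs : 0 < s) (hb0 : 0 < b) (hb2 : b ≤ 2) :
    s ^ s * (b * (s + 1)) ^ b ≤ (s + b) ^ (s + b) := by
  have hsb : 0 < s + b := by linarith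
  refine (rpow_mul_rpow_le_arith_mean_rpow hs.le (by positivity) hs hb0).trans
    (rpow_le_rpow (by positivity) ?_ hsb.le)
  rw [div_le_iff₀ hsb]
  nlinarith [mul_nonneg (mul_nonneg hs.le hb0.le) (sub_nonneg.2 hb2)]

theorem one_sub_rpow_mul_rpow_le_add_one_rpow_neg {t s b : ℝ} (ht0 : 0 ≤ t) (ht1 : t ≤ 1)
    (hs : 0 < s) (hb0 : 0 < b) (hb2 : b ≤ 2) :
    (1 - t) ^ s * t ^ b ≤ (s + 1) ^ (-b) := by
  have hsb : 0 < s + b := by linarith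
  have hB := rpow_pos_of_pos (by linarith : (0:ℝ) < s + 1) b
  rw [rpow_neg (by linarith), ← one_div, le_div_iff₀ hB,
    ← mul_le_mul_iff_left₀ (rpow_pos_of_pos hsb (s + b))]
  calc (1 - t) ^ s * t ^ b * (s + 1) ^ b * (s + b) ^ (s + b)
      = (1 - t) ^ s * t ^ b * (s + b) ^ (s + b) * (s + 1) ^ b := by ring
    _ ≤ s ^ s * b ^ b * (s + 1) ^ b :=
        mul_le_mul_of_nonneg_right (one_sub_rpow_mul_rpow_mul_rpow_le ht0 ht1 hs hb0) hB.le
    _ = s ^ s * (b * (s + 1)) ^ b := by rw [mul_rpow hb0.le (by linarith), mul_assoc]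
    _ ≤ (s + b) ^ (s + b) := rpow_self_mul_mul_add_one_rpow_le hs hb0 hb2
    _ = 1 * (s + b) ^ (s + b) := (one_mul _).symm

theorem stmt_11 (y a m : ℝ) (hy0 : 0 < y) (hy1 : y < 1) (ha : 1 ≤ a) (hm : 1 ≤ m) :
    (1 - y ^ m) ^ (a - 1) * y ^ (m + 1) ≤ a ^ (-1 - 1 / m) := by
  have hm0 : 0 < m := by linarith
  have ht0 : 0 ≤ y ^ m := rpow_nonneg hy0.le m
  have ht1 : y ^ m ≤ 1 := rpow_le_one hy0.le hy1.le hm0.le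
  have hb0 : 0 < 1 + 1 / m := by positivity
  have hy : y ^ (m + 1) = (y ^ m) ^ (1 + 1 / m) := by
    rw [← rpow_mul hy0.le]; congr 1; field_simp
  rw [hy, show -1 - 1 / m = -(1 + 1 / m) by ring]
  rcases ha.eq_or_lt with rfl | ha
  · simpa using rpow_le_one ht0 ht1 hb0.le
  · simpa using one_sub_rpow_mul_rpow_le_add_one_rpow_neg ht0 ht1 (sub_pos.2 ha) hb0
      (by linarith [(div_le_one hm0).2 hm])
end
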